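/- arXiv:2604.25583 — 2 statements merged into one kernel-verified Lean document; each statement's English description precedes it below -/
import Mathlib

section
/- Let q̂ : ℝ^3 → ℂ be measurable, integrable, and satisfy ∫_{ℝ^3} (1+‖ξ‖^2)^2 |q̂(ξ)|^2 dξ < ∞. Define ‖q‖_{H^2} := (2π)^{-3} ( ∫_{ℝ^3} (1+‖ξ‖^2)^2 |q̂(ξ)|^2 dξ )^{1/2} and ‖q‖_{L^2} := (2π)^{-3} ( ∫_{ℝ^3} |q̂(ξ)|^2 dξ )^{1/2}. Then for every z ∈ ℝ^3 and all 0 < k_min ≤ k_max, | (2π)^{-3} ∫_{ℝ^3} q̂(ξ) e^{i⟨z,ξ⟩} dξ − (2π)^{-3} ∫_{k_min ≤ ‖ξ‖ ≤ k_max} q̂(ξ) e^{i⟨z,ξ⟩} dξ | ≤ 2√π ( k_max^{-1/2} ‖q‖_{H^2} + (√3/3) k_min^{3/2} ‖q‖_{L^2} ). -/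
/-!
The truncation error is `(2π)⁻³` times the integral of `q̂ e^{i⟨z,·⟩}` over the complement of the
annulus, i.e. over the ball `‖ξ‖ < kmin` and the tail `‖ξ‖ > kmax`, and the phase has modulus one.
On the ball, Cauchy–Schwarz against `1` gives `|B(kmin)|^{1/2} ‖q̂‖_{L²}` with
`|B(kmin)| = 4π kmin³ / 3`. On the tail, Cauchy–Schwarz against the weight `1 + ‖ξ‖²` gives
`(∫_{‖ξ‖ > kmax} (1 + ‖ξ‖²)⁻²)^{1/2}` times the `H²` integral, and `(1 + ‖ξ‖²)⁻² ≤ ‖ξ‖⁻⁴`, whose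
integral over the tail is `4π / kmax` in polar coordinates.
-/

open MeasureTheory Set Metric Module

theorem setIntegral_norm_le_sqrt_mul_sqrt {α E : Type*} [MeasurableSpace α] {μ : Measure α}
    [NormedAddCommGroup E] {f : α → E} {w : α → ℝ} {s : Set α} (hw : ∀ x, w x ≠ 0)
    (hf : AEStronglyMeasurable f μ) (hwm : AEStronglyMeasurable w μ)
    (hws : IntegrableOn (fun x => (w x)⁻¹ ^ 2) s μ)
    (hwf : Integrable (fun x => w x ^ 2 * ‖f x‖ ^ 2) μ) :
    ∫ x in s, ‖f x‖ ∂μ ≤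
      √(∫ x in s, (w x)⁻¹ ^ 2 ∂μ) * √(∫ x, w x ^ 2 * ‖f x‖ ^ 2 ∂μ) := by
  have hwf' : Integrable (fun x => (w x * ‖f x‖) ^ 2) μ := by simpa only [mul_pow] using hwf
  have hinv : MemLp (fun x => (w x)⁻¹) (ENNReal.ofReal 2) (μ.restrict s) := by
    rw [ENNReal.ofReal_ofNat]
    exact (memLp_two_iff_integrable_sq hwm.aemeasurable.inv.aestronglyMeasurable.restrict).2 hws
  have hmul : MemLp (fun x => w x * ‖f x‖) (ENNReal.ofReal 2) (μ.restrict s) := by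
    rw [ENNReal.ofReal_ofNat]
    exact (memLp_two_iff_integrable_sq (hwm.mul hf.norm).restrict).2 hwf'.integrableOn
  have hcs := integral_mul_norm_le_Lp_mul_Lq Real.HolderConjugate.two_two hinv hmul
  have hsplit : ∀ x, ‖(w x)⁻¹‖ * ‖w x * ‖f x‖‖ = ‖f x‖ := fun x => by
    rw [← norm_mul, inv_mul_cancel_left₀ (hw x), norm_norm]
  simp only [hsplit] at hcs
  simp only [Real.norm_eq_abs, Real.rpow_two, sq_abs, ← Real.sqrt_eq_rpow] at hcs
  refine hcs.trans (mul_le_mul_of_nonneg_left (Real.sqrt_le_sqrt ?_) (Real.sqrt_nonneg _))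
  simpa only [mul_pow] using setIntegral_le_integral hwf' (.of_forall fun x => sq_nonneg _)

lemma indicator_setOf_lt_norm {E β : Type*} [Norm E] [Zero β] (k : ℝ) (g : ℝ → β) :
    {x : E | k < ‖x‖}.indicator (fun x => g ‖x‖) = fun x => (Ioi k).indicator g ‖x‖ :=
  funext fun _ => (indicator_comp_right _).symm

lemma eqOn_pow_smul_indicator_rpow_neg (d : ℕ) (k p : ℝ) :
    EqOn (fun r : ℝ => r ^ d • (Ioi k).indicator (fun r : ℝ => r ^ (-p)) r)
      ((Ioi k).indicator fun r : ℝ => r ^ ((d : ℝ) - p)) (Ioi 0) := by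
  intro r (hr : 0 < r)
  by_cases h : k < r
  · simp only [indicator, mem_Ioi, h, if_true, smul_eq_mul]
    rw [← Real.rpow_natCast, ← Real.rpow_add hr, sub_eq_add_neg]
  · simp [indicator, h]

section RadialTail

variable {E : Type*} [NormedAddCommGroup E] [NormedSpace ℝ E] [Nontrivial E]
  [FiniteDimensional ℝ E] [MeasurableSpace E] [BorelSpace E] (μ : Measure E) [μ.IsAddHaarMeasure]
  {k p : ℝ}

theorem integrableOn_tail_norm_rpow_neg (hk : 0 < k) (hp : (finrank ℝ E : ℝ) < p) :
    IntegrableOn (fun x : E => ‖x‖ ^ (-p)) {x | k < ‖x‖} μ := by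
  rw [← integrable_indicator_iff (measurableSet_lt measurable_const measurable_norm),
    indicator_setOf_lt_norm k (· ^ (-p)), integrable_fun_norm_addHaar μ, integrableOn_congr_fun
    (eqOn_pow_smul_indicator_rpow_neg _ k p) measurableSet_Ioi,
    IntegrableOn, integrable_indicator_iff measurableSet_Ioi]
  refine (integrableOn_Ioi_rpow_of_lt ?_ hk).restrict
  rw [Nat.cast_sub finrank_pos]
  push_cast
  linarith

theorem integral_tail_norm_rpow_neg (hk : 0 < k) (hp : (finrank ℝ E : ℝ) < p) :
    ∫ x in {x : E | k < ‖x‖}, ‖x‖ ^ (-p) ∂μ =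
      finrank ℝ E * μ.real (ball 0 1) * (k ^ ((finrank ℝ E : ℝ) - p) / (p - finrank ℝ E)) := by
  have hd : ((finrank ℝ E - 1 : ℕ) : ℝ) = finrank ℝ E - 1 := by
    rw [Nat.cast_sub finrank_pos, Nat.cast_one]
  rw [← integral_indicator (measurableSet_lt measurable_const measurable_norm),
    indicator_setOf_lt_norm k (· ^ (-p)), integral_fun_norm_addHaar μ, setIntegral_congr_fun
    measurableSet_Ioi (eqOn_pow_smul_indicator_rpow_neg _ k p),
    setIntegral_indicator measurableSet_Ioi, inter_eq_right.2 (Ioi_subset_Ioi hk.le),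
    integral_Ioi_rpow_of_lt (by linarith) hk, nsmul_eq_mul, smul_eq_mul, mul_assoc, hd]
  congr 2
  rw [show (finrank ℝ E : ℝ) - 1 - p + 1 = finrank ℝ E - p by ring, neg_div, ← div_neg, neg_sub]

end RadialTail

theorem norm_setIntegral_union_le {α E : Type*} [MeasurableSpace α] {μ : Measure α}
    [NormedAddCommGroup E] [NormedSpace ℝ E] {f : α → E} (hf : Integrable f μ) (s t : Set α) :
    ‖∫ x in s ∪ t, f x ∂μ‖ ≤ ∫ x in s, ‖f x‖ ∂μ + ∫ x in t, ‖f x‖ ∂μ := by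
  have hs := hf.norm.integrableOn (s := s)
  have ht := hf.norm.integrableOn (s := t)
  rw [← integral_add_measure hs ht]
  exact (norm_integral_le_integral_norm _).trans <| integral_mono_measure
    (Measure.restrict_union_le s t) (.of_forall fun x => norm_nonneg _)
    (Integrable.add_measure hs ht)

theorem compl_setOf_le_norm_and_norm_le {E : Type*} [SeminormedAddCommGroup E] (a b : ℝ) :
    {x : E | a ≤ ‖x‖ ∧ ‖x‖ ≤ b}ᶜ = ball 0 a ∪ {x | b < ‖x‖} := by
  ext x
  simp only [mem_compl_iff, mem_ofPred_eq, mem_union, mem_ball_zero_iff, not_and_or, not_le]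

local notation "ℝ³" => EuclideanSpace ℝ (Fin 3)

lemma inv_one_add_sq_sq_le_rpow_neg_four {s : ℝ} (hs : 0 < s) :
    ((1 + s ^ 2)⁻¹) ^ 2 ≤ s ^ (-4 : ℝ) := by
  rw [Real.rpow_neg hs.le, show (4 : ℝ) = (4 : ℕ) by norm_num, Real.rpow_natCast, inv_pow]
  exact inv_anti₀ (by positivity) (by nlinarith)

theorem setIntegral_norm_ball_le_fin_three {F : Type*} [NormedAddCommGroup F] {f : ℝ³ → F}
    (hf : AEStronglyMeasurable f) (hf2 : Integrable fun ξ => ‖f ξ‖ ^ 2) {r : ℝ} (hr : 0 ≤ r) :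
    ∫ ξ in ball 0 r, ‖f ξ‖ ≤
      2 * √Real.pi * (√3 / 3 * r ^ ((3 : ℝ) / 2)) * √(∫ ξ, ‖f ξ‖ ^ 2) := by
  have hcs := setIntegral_norm_le_sqrt_mul_sqrt (s := ball 0 r) (w := 1) (fun _ => one_ne_zero)
    hf aestronglyMeasurable_const (by simp [ENNReal.mul_lt_top]) (by simpa using hf2)
  have hvol : √(volume.real (ball (0 : ℝ³) r)) = 2 * √Real.pi * (√3 / 3 * r ^ ((3 : ℝ) / 2)) := by
    rw [Real.sqrt_eq_iff_eq_sq (by positivity) (by positivity), Measure.real,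
      EuclideanSpace.volume_ball_fin_three, ENNReal.toReal_mul, ENNReal.toReal_pow,
      ENNReal.toReal_ofReal hr, ENNReal.toReal_ofReal (by positivity), mul_pow, mul_pow, mul_pow,
      div_pow, ← Real.rpow_mul_natCast hr, Real.sq_sqrt Real.pi_pos.le, Real.sq_sqrt zero_le_three]
    norm_num
    ring
  simpa [hvol] using hcs

theorem setIntegral_norm_tail_le_fin_three {F : Type*} [NormedAddCommGroup F] {f : ℝ³ → F}
    (hf : AEStronglyMeasurable f)
    (hf2 : Integrable fun ξ => (1 + ‖ξ‖ ^ 2) ^ 2 * ‖f ξ‖ ^ 2) {r : ℝ} (hr : 0 < r) :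
    ∫ ξ in {ξ : ℝ³ | r < ‖ξ‖}, ‖f ξ‖ ≤
      2 * √Real.pi * r ^ (-(1 : ℝ) / 2) * √(∫ ξ, (1 + ‖ξ‖ ^ 2) ^ 2 * ‖f ξ‖ ^ 2) := by
  have hT : MeasurableSet {ξ : ℝ³ | r < ‖ξ‖} := measurableSet_lt measurable_const measurable_norm
  have hdim : (finrank ℝ ℝ³ : ℝ) < 4 := by rw [finrank_euclideanSpace_fin]; norm_num
  have htail := integrableOn_tail_norm_rpow_neg volume hr hdim
  have hweight : ∀ᵐ ξ ∂volume.restrict {ξ : ℝ³ | r < ‖ξ‖},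
      ((1 + ‖ξ‖ ^ 2)⁻¹) ^ 2 ≤ ‖ξ‖ ^ (-4 : ℝ) :=
    (ae_restrict_iff' hT).2 (.of_forall fun ξ (hξ : r < ‖ξ‖) =>
      inv_one_add_sq_sq_le_rpow_neg_four (hr.trans hξ))
  have hw : AEStronglyMeasurable (fun ξ : ℝ³ => 1 + ‖ξ‖ ^ 2) := by fun_prop
  have hwT : IntegrableOn (fun ξ : ℝ³ => ((1 + ‖ξ‖ ^ 2)⁻¹) ^ 2) {ξ | r < ‖ξ‖} :=
    htail.mono' (by fun_prop) (by simpa using hweight)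
  have htail_eq : ∫ ξ in {ξ : ℝ³ | r < ‖ξ‖}, ‖ξ‖ ^ (-4 : ℝ) = 4 * Real.pi * r⁻¹ := by
    rw [integral_tail_norm_rpow_neg volume hr hdim, Measure.real,
      EuclideanSpace.volume_ball_fin_three, ENNReal.ofReal_one, one_pow, one_mul,
      ENNReal.toReal_ofReal (by positivity)]
    simp only [finrank_euclideanSpace_fin, Nat.cast_ofNat]
    rw [show (3 : ℝ) - 4 = -1 by norm_num, Real.rpow_neg_one]
    ring
  have hsqrt : √(4 * Real.pi * r⁻¹) = 2 * √Real.pi * r ^ (-(1 : ℝ) / 2) := by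
    rw [Real.sqrt_eq_iff_eq_sq (by positivity) (by positivity), mul_pow, mul_pow,
      ← Real.rpow_mul_natCast hr.le, Real.sq_sqrt Real.pi_pos.le]
    norm_num [Real.rpow_neg_one]
  calc ∫ ξ in {ξ : ℝ³ | r < ‖ξ‖}, ‖f ξ‖
      ≤ √(∫ ξ in {ξ : ℝ³ | r < ‖ξ‖}, ((1 + ‖ξ‖ ^ 2)⁻¹) ^ 2) *
          √(∫ ξ, (1 + ‖ξ‖ ^ 2) ^ 2 * ‖f ξ‖ ^ 2) :=
        setIntegral_norm_le_sqrt_mul_sqrt (fun ξ => by positivity) hf hw hwT hf2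
    _ ≤ √(4 * Real.pi * r⁻¹) * √(∫ ξ, (1 + ‖ξ‖ ^ 2) ^ 2 * ‖f ξ‖ ^ 2) := by
        gcongr
        exact htail_eq ▸ integral_mono_ae hwT htail hweight
    _ = _ := by rw [hsqrt]

theorem truncation_error_3D_general (qhat : EuclideanSpace ℝ (Fin 3) → ℂ)
    (hint : Integrable qhat)
    (hH2 : Integrable (fun ξ : EuclideanSpace ℝ (Fin 3) => (1 + ‖ξ‖ ^ 2) ^ 2 * ‖qhat ξ‖ ^ 2))
    (z : EuclideanSpace ℝ (Fin 3)) (kmin kmax : ℝ) (hkmin : 0 < kmin) (hk : kmin ≤ kmax) :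
    ‖((2 * Real.pi : ℂ) ^ 3)⁻¹ *
        (∫ ξ, qhat ξ * Complex.exp (Complex.I * ((inner ℝ z ξ : ℝ) : ℂ))) -
      ((2 * Real.pi : ℂ) ^ 3)⁻¹ *
        (∫ ξ in {ξ : EuclideanSpace ℝ (Fin 3) | kmin ≤ ‖ξ‖ ∧ ‖ξ‖ ≤ kmax},
          qhat ξ * Complex.exp (Complex.I * ((inner ℝ z ξ : ℝ) : ℂ)))‖ ≤
      2 * Real.sqrt Real.pi *
        (kmax ^ (-(1 : ℝ) / 2) * (((2 * Real.pi) ^ 3)⁻¹ *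
            Real.sqrt (∫ ξ, (1 + ‖ξ‖ ^ 2) ^ 2 * ‖qhat ξ‖ ^ 2)) +
          Real.sqrt 3 / 3 * kmin ^ ((3 : ℝ) / 2) *
            (((2 * Real.pi) ^ 3)⁻¹ * Real.sqrt (∫ ξ, ‖qhat ξ‖ ^ 2))) := by
  set g : ℝ³ → ℂ := fun ξ => qhat ξ * Complex.exp (Complex.I * ((inner ℝ z ξ : ℝ) : ℂ))
  have hg_norm : ∀ ξ, ‖g ξ‖ = ‖qhat ξ‖ := fun ξ => by
    simp [g, mul_comm Complex.I, Complex.norm_exp_ofReal_mul_I]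
  have hg : Integrable g :=
    hint.norm.mono' (by fun_prop) (.of_forall fun ξ => (hg_norm ξ).le)
  have hL2 : Integrable fun ξ => ‖qhat ξ‖ ^ 2 :=
    hH2.mono' (by fun_prop) (.of_forall fun ξ => by
      rw [Real.norm_of_nonneg (by positivity)]
      exact le_mul_of_one_le_left (by positivity) (one_le_pow₀ (by simp)))
  have hA : MeasurableSet {ξ : ℝ³ | kmin ≤ ‖ξ‖ ∧ ‖ξ‖ ≤ kmax} :=
    (measurableSet_le measurable_const measurable_norm).inter
      (measurableSet_le measurable_norm measurable_const)
  calc _ = ((2 * Real.pi) ^ 3)⁻¹ * ‖∫ ξ in ball 0 kmin ∪ {ξ | kmax < ‖ξ‖}, g ξ‖ := by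
        rw [← mul_sub, ← setIntegral_compl hA hg, compl_setOf_le_norm_and_norm_le, norm_mul]
        simp [abs_of_pos Real.pi_pos]
    _ ≤ ((2 * Real.pi) ^ 3)⁻¹ *
          ((∫ ξ in ball 0 kmin, ‖qhat ξ‖) + ∫ ξ in {ξ | kmax < ‖ξ‖}, ‖qhat ξ‖) := by
        gcongr
        simpa only [hg_norm] using norm_setIntegral_union_le hg _ _
    _ ≤ _ := by
        grw [setIntegral_norm_ball_le_fin_three hint.aestronglyMeasurable hL2 hkmin.le,
          setIntegral_norm_tail_le_fin_three hint.aestronglyMeasurable hH2 (hkmin.trans_le hk)]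
        exact le_of_eq (by ring)

/-- Three-dimensional wavenumber-truncation error estimate: truncating the
Fourier integral `(2π)^{-3} ∫ q̂(ξ) e^{i⟨z,ξ⟩} dξ` to the annulus `kmin ≤ ‖ξ‖ ≤ kmax`
produces an error at most `2√π (kmax^{-1/2} ‖q‖_{H²} + (√3/3) kmin^{3/2} ‖q‖_{L²})`. -/
theorem truncation_error_3D (qhat : EuclideanSpace ℝ (Fin 3) → ℂ)
    (hmeas : Measurable qhat) (hint : Integrable qhat)
    (hH2 : Integrable (fun ξ : EuclideanSpace ℝ (Fin 3) => (1 + ‖ξ‖ ^ 2) ^ 2 * ‖qhat ξ‖ ^ 2))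
    (z : EuclideanSpace ℝ (Fin 3)) (kmin kmax : ℝ) (hkmin : 0 < kmin) (hk : kmin ≤ kmax) :
    ‖((2 * Real.pi : ℂ) ^ 3)⁻¹ *
        (∫ ξ, qhat ξ * Complex.exp (Complex.I * ((inner ℝ z ξ : ℝ) : ℂ))) -
      ((2 * Real.pi : ℂ) ^ 3)⁻¹ *
        (∫ ξ in {ξ : EuclideanSpace ℝ (Fin 3) | kmin ≤ ‖ξ‖ ∧ ‖ξ‖ ≤ kmax},
          qhat ξ * Complex.exp (Complex.I * ((inner ℝ z ξ : ℝ) : ℂ)))‖ ≤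
      2 * Real.sqrt Real.pi *
        (kmax ^ (-(1 : ℝ) / 2) * (((2 * Real.pi) ^ 3)⁻¹ *
            Real.sqrt (∫ ξ, (1 + ‖ξ‖ ^ 2) ^ 2 * ‖qhat ξ‖ ^ 2)) +
          Real.sqrt 3 / 3 * kmin ^ ((3 : ℝ) / 2) *
            (((2 * Real.pi) ^ 3)⁻¹ * Real.sqrt (∫ ξ, ‖qhat ξ‖ ^ 2))) :=
  truncation_error_3D_general qhat hint hH2 z kmin kmax hkmin hk
end

section
/- Let q : ℝ^2 → ℂ be continuous and integrable, and assume its Fourier transform q̂ is integrable and satisfies ∫_{ℝ^2} (1+‖ξ‖^2)^2 |q̂(ξ)|^2 dξ < ∞. With ‖q‖_{H^2} := (2π)^{-2} ( ∫_{ℝ^2} (1+‖ξ‖^2)^2 |q̂(ξ)|^2 dξ )^{1/2} and ‖q‖_{L^2} := (2π)^{-2} ( ∫_{ℝ^2} |q̂(ξ)|^2 dξ )^{1/2}, for every z ∈ ℝ^2 and all 0 < k_min ≤ k_max, | q(z) − (2π)^{-2} ∫_{k_min ≤ ‖ξ‖ ≤ k_max} q̂(ξ) e^{i⟨z,ξ⟩}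 dξ | ≤ √π ( k_max^{-1} ‖q‖_{H^2} + k_min ‖q‖_{L^2} ). In particular the truncated indicator I^∞_K satisfies |I^∞_K(z) − q(z)| = O(k_max^{-1}) + O(k_min). -/
/-!
Fourier inversion writes `q z` as `(2π)⁻² ∫ q̂ ξ e^{i⟨z,ξ⟩} dξ`, so the truncation error is the
same integral over the low frequencies `‖ξ‖ < kmin` and the high frequencies `‖ξ‖ > kmax`.
Cauchy–Schwarz against `1` bounds the first part by
`√(area of the disc) ‖q̂‖_{L²} = √π kmin ‖q̂‖_{L²}`.
Cauchy–Schwarz against the weight `(1 + ‖ξ‖²)⁻¹` bounds the second by `‖(1 + ‖ξ‖²) q̂‖_{L²}` times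
`(∫_{‖ξ‖ > kmax} (1 + ‖ξ‖²)⁻² dξ)^{1/2} = (π / (1 + kmax²))^{1/2} ≤ √π / kmax`, the integral being
computed in polar coordinates.
-/

open MeasureTheory Real Set Metric Module Filter
open scoped FourierTransform ENNReal Topology

section CauchySchwarz

variable {α : Type*} [MeasurableSpace α] {μ : Measure α}

theorem integral_mul_le_sqrt_mul_sqrt_of_nonneg {f g : α → ℝ} (hf₀ : 0 ≤ᵐ[μ] f)
    (hg₀ : 0 ≤ᵐ[μ] g) (hf : MemLp f 2 μ) (hg : MemLp g 2 μ) :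
    ∫ a, f a * g a ∂μ ≤ √(∫ a, f a ^ 2 ∂μ) * √(∫ a, g a ^ 2 ∂μ) := by
  have h := integral_mul_le_Lp_mul_Lq_of_nonneg Real.HolderConjugate.two_two hf₀ hg₀
    (by simpa using hf) (by simpa using hg)
  simpa only [rpow_two, sqrt_eq_rpow, one_div] using h

theorem setIntegral_le_sqrt_measureReal_mul_sqrt {f : α → ℝ} (hf₀ : 0 ≤ᵐ[μ] f)
    (hf : MemLp f 2 μ) {s : Set α} (hs : μ s ≠ ∞) :
    ∫ a in s, f a ∂μ ≤ √(μ.real s) * √(∫ a, f a ^ 2 ∂μ) := by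
  have : IsFiniteMeasure (μ.restrict s) := isFiniteMeasure_restrict.2 hs
  have h := integral_mul_le_sqrt_mul_sqrt_of_nonneg (ae_restrict_of_ae hf₀)
    (ae_of_all _ fun _ => zero_le_one) (hf.restrict s) (memLp_const (1 : ℝ))
  simp only [mul_one, one_pow, integral_const, smul_eq_mul, measureReal_restrict_apply_univ] at h
  have hsq : ∫ a in s, f a ^ 2 ∂μ ≤ ∫ a, f a ^ 2 ∂μ :=
    setIntegral_le_integral hf.integrable_sq (ae_of_all _ fun _ => sq_nonneg _)
  refine h.trans ?_
  rw [mul_comm]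
  gcongr

end CauchySchwarz

theorem norm_integral_sub_setIntegral_annulus_le {V E : Type*} [NormedAddCommGroup V]
    [MeasurableSpace V] [OpensMeasurableSpace V] [NormedAddCommGroup E] [NormedSpace ℝ E]
    {μ : Measure V} {Φ : V → E} (hΦ : Integrable Φ μ) (a b : ℝ) :
    ‖∫ ξ, Φ ξ ∂μ - ∫ ξ in {ξ | a ≤ ‖ξ‖ ∧ ‖ξ‖ ≤ b}, Φ ξ ∂μ‖ ≤
      ∫ ξ in ball 0 a, ‖Φ ξ‖ ∂μ + ∫ ξ in (closedBall 0 b)ᶜ, ‖Φ ξ‖ ∂μ := by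
  have hannulus : {ξ : V | a ≤ ‖ξ‖ ∧ ‖ξ‖ ≤ b} = closedBall 0 b \ ball 0 a := by
    ext ξ
    simp [and_comm]
  have hcompl : (closedBall (0 : V) b \ ball 0 a)ᶜ = ball 0 a ∪ (closedBall 0 b)ᶜ := by
    rw [compl_sdiff, union_comm]
  rw [hannulus, ← integral_add_compl (measurableSet_closedBall.diff measurableSet_ball) hΦ,
    add_sub_cancel_left, hcompl, ← integral_add_measure hΦ.norm.restrict hΦ.norm.restrict]
  exact (norm_integral_le_integral_norm _).trans <| integral_mono_measure
    (Measure.restrict_union_le _ _) (ae_of_all _ fun _ => norm_nonneg _)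
    (hΦ.norm.restrict.add_measure hΦ.norm.restrict)

theorem integrable_inv_one_add_norm_sq_sq {V : Type*} [NormedAddCommGroup V]
    [InnerProductSpace ℝ V] [FiniteDimensional ℝ V] [MeasurableSpace V] [BorelSpace V]
    (μ : Measure V) [μ.IsAddHaarMeasure] (hV : finrank ℝ V < 4) :
    Integrable (fun ξ : V => ((1 + ‖ξ‖ ^ 2) ^ 2)⁻¹) μ := by
  refine (integrable_rpow_neg_one_add_norm_sq (μ := μ) (r := 4) (by exact_mod_cast hV)).congr
    (ae_of_all _ fun ξ => ?_)
  dsimp only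
  rw [show (-4 : ℝ) / 2 = -(2 : ℕ) by norm_num, rpow_neg (by positivity), rpow_natCast]

theorem integral_Ioi_mul_inv_one_add_sq_sq {k : ℝ} (hk : 0 ≤ k) :
    ∫ r in Ioi k, r * ((1 + r ^ 2) ^ 2)⁻¹ = (2 * (1 + k ^ 2))⁻¹ := by
  have hderiv : ∀ r ∈ Ici k,
      HasDerivAt (fun r : ℝ => -(2 * (1 + r ^ 2))⁻¹) (r * ((1 + r ^ 2) ^ 2)⁻¹) r := by
    intro r _
    refine ((((hasDerivAt_pow 2 r).const_add 1).const_mul 2).inv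
      (by positivity)).neg.congr_deriv ?_
    field_simp
    ring
  have hlim : Tendsto (fun r : ℝ => -(2 * (1 + r ^ 2))⁻¹) atTop (𝓝 0) := by
    have h : Tendsto (fun r : ℝ => 2 * (1 + r ^ 2)) atTop atTop :=
      (tendsto_atTop_add_const_left _ 1 (tendsto_pow_atTop two_ne_zero)).const_mul_atTop
        two_pos
    simpa using (tendsto_inv_atTop_zero.comp h).neg
  rw [integral_Ioi_of_hasDerivAt_of_nonneg' hderiv
    (fun r hr => by have : 0 < r := hk.trans_lt hr; positivity) hlim]
  ring

section Fourier

variable {V : Type*} [NormedAddCommGroup V] [InnerProductSpace ℝ V] [FiniteDimensional ℝ V]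
  [MeasurableSpace V] [BorelSpace V]

noncomputable def fourierAngular (q : V → ℂ) (ξ : V) : ℂ :=
  ∫ y, q y * Complex.exp (-(Complex.I * ((inner ℝ ξ y : ℝ) : ℂ)))

theorem fourierAngular_eq_fourier (q : V → ℂ) (ξ : V) :
    fourierAngular q ξ = 𝓕 q ((2 * π)⁻¹ • ξ) := by
  rw [fourierAngular, Real.fourier_eq']
  congr 1 with y
  rw [smul_eq_mul, mul_comm, real_inner_smul_right, real_inner_comm]
  congr 2
  push_cast
  field_simp

theorem integrable_fourier_of_integrable_fourierAngular {q : V → ℂ}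
    (h : Integrable (fourierAngular q)) : Integrable (𝓕 q) := by
  refine (h.comp_smul (two_pi_pos.ne' : 2 * π ≠ 0)).congr (ae_of_all _ fun w => ?_)
  simp only [fourierAngular_eq_fourier, smul_smul, inv_mul_cancel₀ two_pi_pos.ne', one_smul]

theorem fourierAngular_inversion {q : V → ℂ} (hq : Integrable q)
    (hq_hat : Integrable (fourierAngular q)) {z : V} (hz : ContinuousAt q z) :
    ((2 * π : ℂ) ^ finrank ℝ V)⁻¹ *
        ∫ ξ, fourierAngular q ξ * Complex.exp (Complex.I * ((inner ℝ z ξ : ℝ) : ℂ)) = q z := by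
  set G : V → ℂ := fun w => Complex.exp (↑(2 * π * inner ℝ w z) * Complex.I) • 𝓕 q w
  have hpt : ∀ ξ : V, fourierAngular q ξ * Complex.exp (Complex.I * ((inner ℝ z ξ : ℝ) : ℂ)) =
      G ((2 * π)⁻¹ • ξ) := by
    intro ξ
    simp only [G]
    rw [fourierAngular_eq_fourier, smul_eq_mul, mul_comm, real_inner_smul_left, real_inner_comm]
    congr 2
    push_cast
    field_simp
  rw [integral_congr_ae (ae_of_all _ hpt), Measure.integral_comp_smul, ← Real.fourierInv_eq',
    hq.fourierInv_fourier_eq (integrable_fourier_of_integrable_fourierAngular hq_hat) hz,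
    inv_pow, inv_inv, abs_of_pos (by positivity), Complex.real_smul, ← mul_assoc]
  push_cast
  rw [inv_mul_cancel₀ (by simp [pi_ne_zero]), one_mul]

end Fourier

section Plane

local notation "ℝ²" => EuclideanSpace ℝ (Fin 2)

variable {E : Type*} [NormedAddCommGroup E]

theorem integral_compl_closedBall_inv_one_add_norm_sq_sq {k : ℝ} (hk : 0 ≤ k) :
    ∫ ξ in (closedBall (0 : ℝ²) k)ᶜ, ((1 + ‖ξ‖ ^ 2) ^ 2)⁻¹ = π / (1 + k ^ 2) := by
  have hpolar := integral_fun_norm_addHaar (volume : Measure ℝ²)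
    ((Ioi k).indicator fun r => ((1 + r ^ 2) ^ 2)⁻¹)
  have hlhs : (closedBall (0 : ℝ²) k)ᶜ.indicator (fun ξ => ((1 + ‖ξ‖ ^ 2) ^ 2)⁻¹) =
      fun ξ => (Ioi k).indicator (fun r => ((1 + r ^ 2) ^ 2)⁻¹) ‖ξ‖ := by
    ext ξ
    by_cases h : k < ‖ξ‖ <;> simp [indicator, h]
  have hrhs : ∀ y : ℝ, y ^ (2 - 1) • (Ioi k).indicator (fun r => ((1 + r ^ 2) ^ 2)⁻¹) y =
      (Ioi k).indicator (fun r => r * ((1 + r ^ 2) ^ 2)⁻¹) y := by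
    intro y
    by_cases h : k < y <;> simp [indicator, h]
  rw [← integral_indicator measurableSet_closedBall.compl, hlhs, hpolar,
    finrank_euclideanSpace_fin]
  simp only [hrhs]
  rw [setIntegral_indicator measurableSet_Ioi, Ioi_inter_Ioi, max_eq_right hk,
    integral_Ioi_mul_inv_one_add_sq_sq hk, measureReal_def, EuclideanSpace.volume_ball_fin_two]
  simp only [ENNReal.ofReal_one, one_pow, one_mul, pi_nonneg, ENNReal.toReal_ofReal, mul_inv_rev,
    smul_eq_mul, nsmul_eq_mul, Nat.cast_ofNat]
  field_simp

theorem setIntegral_ball_norm_le {F : ℝ² → E} (hF : MemLp F 2) {k : ℝ} (hk : 0 ≤ k) :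
    ∫ ξ in ball 0 k, ‖F ξ‖ ≤ √π * k * √(∫ ξ, ‖F ξ‖ ^ 2) := by
  have h := setIntegral_le_sqrt_measureReal_mul_sqrt (ae_of_all _ fun ξ => norm_nonneg (F ξ))
    hF.norm (s := ball 0 k) measure_ball_lt_top.ne
  rwa [measureReal_def, EuclideanSpace.volume_ball_fin_two, ← ENNReal.ofReal_pow hk,
    ← ENNReal.ofReal_mul (by positivity), ENNReal.toReal_ofReal (by positivity),
    sqrt_mul' _ pi_nonneg, sqrt_sq hk, mul_comm k] at h

theorem setIntegral_compl_closedBall_norm_le {F : ℝ² → E} (hF : AEStronglyMeasurable F)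
    (hH2 : Integrable fun ξ => (1 + ‖ξ‖ ^ 2) ^ 2 * ‖F ξ‖ ^ 2) {k : ℝ} (hk : 0 < k) :
    ∫ ξ in (closedBall 0 k)ᶜ, ‖F ξ‖ ≤ √π * k⁻¹ * √(∫ ξ, (1 + ‖ξ‖ ^ 2) ^ 2 * ‖F ξ‖ ^ 2) := by
  have hweighted :
      MemLp (fun ξ => (1 + ‖ξ‖ ^ 2) * ‖F ξ‖) 2 (volume.restrict (closedBall 0 k)ᶜ) := by
    refine ((memLp_two_iff_integrable_sq (by fun_prop)).2 ?_).restrict _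
    exact hH2.congr (ae_of_all _ fun ξ => by ring)
  have hweight :
      MemLp (fun ξ : ℝ² => (1 + ‖ξ‖ ^ 2)⁻¹) 2 (volume.restrict (closedBall 0 k)ᶜ) := by
    refine ((memLp_two_iff_integrable_sq (by fun_prop)).2 ?_).restrict _
    exact (integrable_inv_one_add_norm_sq_sq volume (by simp)).congr
      (ae_of_all _ fun ξ => (inv_pow _ 2).symm)
  have h := integral_mul_le_sqrt_mul_sqrt_of_nonneg (ae_of_all _ fun ξ => by positivity)
    (ae_of_all _ fun ξ => by positivity) hweighted hweight
  have hcancel : ∀ ξ : ℝ², (1 + ‖ξ‖ ^ 2) * ‖F ξ‖ * (1 + ‖ξ‖ ^ 2)⁻¹ = ‖F ξ‖ := fun ξ => by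
    field_simp
  have hrestrict : ∫ ξ in (closedBall 0 k)ᶜ, ((1 + ‖ξ‖ ^ 2) * ‖F ξ‖) ^ 2 ≤
      ∫ ξ, (1 + ‖ξ‖ ^ 2) ^ 2 * ‖F ξ‖ ^ 2 := by
    simp only [mul_pow]
    exact setIntegral_le_integral hH2 (ae_of_all _ fun ξ => by positivity)
  have htail : √(π / (1 + k ^ 2)) ≤ √π * k⁻¹ := by
    calc √(π / (1 + k ^ 2)) ≤ √(π / k ^ 2) := sqrt_le_sqrt (by gcongr; linarith)
      _ = √π * k⁻¹ := by rw [sqrt_div' _ (sq_nonneg k), sqrt_sq hk.le, div_eq_mul_inv]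
  simp only [hcancel, inv_pow] at h
  rw [integral_compl_closedBall_inv_one_add_norm_sq_sq hk.le] at h
  calc ∫ ξ in (closedBall 0 k)ᶜ, ‖F ξ‖ ≤ _ := h
    _ ≤ √(∫ ξ, (1 + ‖ξ‖ ^ 2) ^ 2 * ‖F ξ‖ ^ 2) * (√π * k⁻¹) := by gcongr
    _ = _ := by ring

theorem norm_integral_sub_setIntegral_annulus_le_sqrt_pi [NormedSpace ℝ E] {F : ℝ² → E}
    (hF : Integrable F) (hH2 : Integrable fun ξ => (1 + ‖ξ‖ ^ 2) ^ 2 * ‖F ξ‖ ^ 2)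
    {kmin kmax : ℝ} (hkmin : 0 < kmin) (hkmax : 0 < kmax) :
    ‖(∫ ξ, F ξ) - ∫ ξ in {ξ | kmin ≤ ‖ξ‖ ∧ ‖ξ‖ ≤ kmax}, F ξ‖ ≤
      √π * (kmax⁻¹ * √(∫ ξ, (1 + ‖ξ‖ ^ 2) ^ 2 * ‖F ξ‖ ^ 2) + kmin * √(∫ ξ, ‖F ξ‖ ^ 2)) := by
  have hL2 : MemLp F 2 := by
    refine (memLp_two_iff_integrable_sq_norm hF.1).2 (hH2.mono' (by fun_prop) ?_)
    refine ae_of_all _ fun ξ => ?_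
    rw [norm_of_nonneg (by positivity)]
    exact le_mul_of_one_le_left (by positivity) (one_le_pow₀ (by simp))
  calc _ ≤ (∫ ξ in ball 0 kmin, ‖F ξ‖) + ∫ ξ in (closedBall 0 kmax)ᶜ, ‖F ξ‖ :=
        norm_integral_sub_setIntegral_annulus_le hF kmin kmax
    _ ≤ √π * kmin * √(∫ ξ, ‖F ξ‖ ^ 2) +
          √π * kmax⁻¹ * √(∫ ξ, (1 + ‖ξ‖ ^ 2) ^ 2 * ‖F ξ‖ ^ 2) :=
        add_le_add (setIntegral_ball_norm_le hL2 hkmin.le)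
          (setIntegral_compl_closedBall_norm_le hF.1 hH2 hkmax)
    _ = _ := by ring

end Plane

/-- 2D resolution bound for the truncated far-field indicator:
`|q(z) - (2π)^{-2} ∫_{kmin ≤ ‖ξ‖ ≤ kmax} q̂(ξ) e^{i⟨z,ξ⟩} dξ|
  ≤ √π (kmax⁻¹ ‖q‖_{H²} + kmin ‖q‖_{L²})`,
where `q̂(ξ) = ∫ q(y) e^{-i⟨ξ,y⟩} dy`. -/
theorem resolution_bound_2D (q : EuclideanSpace ℝ (Fin 2) → ℂ)
    (hq_cont : Continuous q) (hq_int : Integrable q)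
    (hqhat_int : Integrable (fun ξ : EuclideanSpace ℝ (Fin 2) =>
      ∫ y, q y * Complex.exp (-(Complex.I * ((inner ℝ ξ y : ℝ) : ℂ)))))
    (hH2 : Integrable (fun ξ : EuclideanSpace ℝ (Fin 2) => (1 + ‖ξ‖ ^ 2) ^ 2 *
      ‖∫ y, q y * Complex.exp (-(Complex.I * ((inner ℝ ξ y : ℝ) : ℂ)))‖ ^ 2))
    (z : EuclideanSpace ℝ (Fin 2)) (kmin kmax : ℝ) (hkmin : 0 < kmin) (hk : kmin ≤ kmax) :
    ‖q z - ((2 * Real.pi : ℂ) ^ 2)⁻¹ *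
        (∫ ξ in {ξ : EuclideanSpace ℝ (Fin 2) | kmin ≤ ‖ξ‖ ∧ ‖ξ‖ ≤ kmax},
          (∫ y, q y * Complex.exp (-(Complex.I * ((inner ℝ ξ y : ℝ) : ℂ)))) *
            Complex.exp (Complex.I * ((inner ℝ z ξ : ℝ) : ℂ)))‖ ≤
      Real.sqrt Real.pi *
        (kmax⁻¹ * (((2 * Real.pi) ^ 2)⁻¹ * Real.sqrt (∫ ξ, (1 + ‖ξ‖ ^ 2) ^ 2 *
            ‖∫ y, q y * Complex.exp (-(Complex.I * ((inner ℝ ξ y : ℝ) : ℂ)))‖ ^ 2)) +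
          kmin * (((2 * Real.pi) ^ 2)⁻¹ * Real.sqrt (∫ ξ,
            ‖∫ y, q y * Complex.exp (-(Complex.I * ((inner ℝ ξ y : ℝ) : ℂ)))‖ ^ 2))) := by
  show ‖q z - _ * ∫ ξ in _, fourierAngular q ξ * _‖ ≤
    √π * (kmax⁻¹ * (_ * √(∫ ξ, _ * ‖fourierAngular q ξ‖ ^ 2)) +
      kmin * (_ * √(∫ ξ, ‖fourierAngular q ξ‖ ^ 2)))
  change Integrable (fun ξ => _ * ‖fourierAngular q ξ‖ ^ 2) at hH2
  have hinv := fourierAngular_inversion hq_int hqhat_int hq_cont.continuousAt (z := z)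
  rw [finrank_euclideanSpace_fin] at hinv
  set Φ : EuclideanSpace ℝ (Fin 2) → ℂ := fun ξ =>
    fourierAngular q ξ * Complex.exp (Complex.I * ((inner ℝ z ξ : ℝ) : ℂ))
  have hnorm : ∀ ξ, ‖Φ ξ‖ = ‖fourierAngular q ξ‖ := fun ξ => by
    simp only [Φ, norm_mul, Complex.norm_exp_I_mul_ofReal, mul_one]
  have hΦ : Integrable Φ := hqhat_int.norm.mono' (hqhat_int.1.mul (by fun_prop))
    (ae_of_all _ fun ξ => (hnorm ξ).le)
  have htrunc := norm_integral_sub_setIntegral_annulus_le_sqrt_pi hΦ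
    (by simpa only [hnorm] using hH2) hkmin (hkmin.trans_le hk)
  simp only [hnorm] at htrunc
  calc _ = ((2 * π) ^ 2)⁻¹ *
        ‖(∫ ξ, Φ ξ) - ∫ ξ in {ξ | kmin ≤ ‖ξ‖ ∧ ‖ξ‖ ≤ kmax}, Φ ξ‖ := by
        rw [← hinv, ← mul_sub, norm_mul]
        simp [abs_of_pos pi_pos]
    _ ≤ ((2 * π) ^ 2)⁻¹ * (√π * (kmax⁻¹ *
          √(∫ ξ, (1 + ‖ξ‖ ^ 2) ^ 2 * ‖fourierAngular q ξ‖ ^ 2) +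
            kmin * √(∫ ξ, ‖fourierAngular q ξ‖ ^ 2))) := by gcongr
    _ = _ := by ring
end
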